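/- (Quasideterminant factorization of the determinant) Let M be an n×n (q̂,p̂)-Manin matrix over R and let I=(i_1,…,i_n) and J=(j_1,…,j_n) be two permutations of (1,…,n), viewed as multi-indices. For 1≤k≤n let I_k and J_k denote the increasing rearrangements of (i_1,…,i_k) and (j_1,…,j_k) respectively. Assume that for each k the k×k submatrix M_{J_kI_k} is invertible over R and that the entry of (M_{J_kI_k})^{−1} in row i_k and column j_k is invertible in R, so that the quasideterminant |M_{J_kI_k}|_{j_k i_k} is defined. Then cdet_{q̂}(M) = (ε(q̂,J) / ε(p̂,I)) · |M_{J_1I_1}|_{j_1i_1} · |M_{J_2I_2}|_{j_2i_2} ⋯ |M_{J_nI_n}|_{j_ni_n}. -/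

import Mathlib

open scoped BigOperators Classical

noncomputable section

/-- `ε(q̂, I, σ)`: the `q̂`-inversion sign associated to the multi-index `I` and `σ ∈ S_r`,
`ε(q̂,I,σ) = ∏_{s<t, σ(s)>σ(t)} (-q_{i_{σ(s)} i_{σ(t)}})`. -/
def manEps {n r : ℕ} (q : Matrix (Fin n) (Fin n) ℂ) (I : Fin r → Fin n)
    (σ : Equiv.Perm (Fin r)) : ℂ :=
  ∏ st ∈ Finset.univ.filter (fun st : Fin r × Fin r => st.1 < st.2 ∧ σ st.2 < σ st.1),
    (-q (I (σ st.1)) (I (σ st.2)))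

/-- `ε(q̂, I)` for a multi-index `I`: `0` if two entries coincide, and
`∏_{s<t, i_s>i_t}(-q_{i_s i_t})` otherwise. -/
def manEpsIdx {n r : ℕ} (q : Matrix (Fin n) (Fin n) ℂ) (I : Fin r → Fin n) : ℂ :=
  if Function.Injective I then
    ∏ st ∈ Finset.univ.filter (fun st : Fin r × Fin r => st.1 < st.2 ∧ I st.2 < I st.1),
      (-q (I st.1) (I st.2))
  else 0

/-- The column `q̂`-minor determinant
`cdet_{q̂}(M_{IJ}) = ∑_{σ∈S_r} ε(q̂,I,σ) M_{i_{σ(1)},j_1} ⋯ M_{i_{σ(r)},j_r}`. -/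
def cdet {R : Type*} [Ring R] [Algebra ℂ R] {n m r : ℕ} (q : Matrix (Fin n) (Fin n) ℂ)
    (M : Matrix (Fin n) (Fin m) R) (I : Fin r → Fin n) (J : Fin r → Fin m) : R :=
  ∑ σ : Equiv.Perm (Fin r),
    manEps q I σ • (List.ofFn fun a : Fin r => M (I (σ a)) (J a)).prod

/-- A parametric matrix: nonzero entries with `q_{ij} q_{ji} = 1` and `q_{ii} = 1`. -/
def IsParametric {n : ℕ} (q : Matrix (Fin n) (Fin n) ℂ) : Prop :=
  (∀ i j, q i j ≠ 0) ∧ (∀ i j, q i j * q j i = 1) ∧ ∀ i, q i i = 1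

/-- An `n×m` `(q̂, p̂)`-Manin matrix over `R`. -/
def IsManin {R : Type*} [Ring R] [Algebra ℂ R] {n m : ℕ} (q : Matrix (Fin n) (Fin n) ℂ)
    (p : Matrix (Fin m) (Fin m) ℂ) (M : Matrix (Fin n) (Fin m) R) : Prop :=
  (∀ (i j : Fin n) (k : Fin m), i < j → M i k * M j k = q j i • (M j k * M i k)) ∧
  ∀ (i j : Fin n) (k l : Fin m), i < j → k < l →
    M i k * M j l - (q j i * p k l) • (M j l * M i k) + p k l • (M i l * M j k)
      - q j i • (M j k * M i l) = 0

/-- The set `{i_1, …, i_{k+1}}` of the first `k+1` values of the multi-index `I`.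
Its increasing enumeration is the ordered multi-index `I_{k+1}`. -/
def firstIdx {n : ℕ} (I : Fin n → Fin n) (k : Fin n) : Finset (Fin n) :=
  Finset.image (fun a : Fin ((k : ℕ) + 1) => I (Fin.castLE k.isLt a)) Finset.univ

theorem firstIdx_card {n : ℕ} {I : Fin n → Fin n} (hI : Function.Injective I) (k : Fin n) :
    (firstIdx I k).card = (k : ℕ) + 1 := by
  rw [firstIdx, Finset.card_image_of_injective _
    (fun a b hab => Fin.castLE_injective _ (hI hab))]
  simp

theorem self_mem_firstIdx {n : ℕ} (I : Fin n → Fin n) (k : Fin n) : I k ∈ firstIdx I k :=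
  Finset.mem_image.mpr ⟨⟨(k : ℕ), Nat.lt_succ_self _⟩, Finset.mem_univ _, rfl⟩

/-!
Permuting the columns of a `(q̂, p̂)`-Manin matrix multiplies `cdet_{q̂}` by `ε(p̂, ·)`: for an
adjacent transposition `τ`, the summands of `σ` and `σ τ` differ only in two adjacent factors,
and the Manin relations exchange them. In particular `cdet_{q̂}` vanishes when two columns
coincide. Now let `z` be the last column of the inverse of a square submatrix `M_{KL}`. Expanding
`cdet(M_{KL}) z_last = ∑_b cdet(M_{KL} with last column replaced by column b) z_b` (all but one
term vanish), then summing over `b` first, only the permutations fixing the last index survive: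
`cdet(M_{KL}) z_last` is the `cdet` of `M_{KL}` with its last row and column removed. As `z_last`
is the inverse of the quasideterminant `|M_{KL}|_{k_last l_last}`, induction over the leading
minors `M_{J_k I_k}` gives `cdet_{q̂}(M_{JI}) = |M_{J_1I_1}|_{j_1i_1} ⋯ |M_{J_nI_n}|_{j_ni_n}`, and
reordering rows and columns back to the identity contributes `ε(q̂,J) / ε(p̂,I)`.
-/

open Equiv Finset

namespace Equiv.Perm

variable {r : ℕ}

def extendLast (σ : Perm (Fin r)) : Perm (Fin (r + 1)) :=
  finSuccEquivLast.symm.permCongr σ.optionCongr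

@[simp] lemma extendLast_castSucc (σ : Perm (Fin r)) (a : Fin r) :
    σ.extendLast a.castSucc = (σ a).castSucc := by
  simp [extendLast, permCongr_apply]

@[simp] lemma extendLast_last (σ : Perm (Fin r)) : σ.extendLast (Fin.last r) = Fin.last r := by
  simp [extendLast, permCongr_apply]

lemma sum_filter_apply_last_eq_last {E : Type*} [AddCommMonoid E] (F : Perm (Fin (r + 1)) → E) :
    ∑ σ with σ (Fin.last r) = Fin.last r, F σ = ∑ σ : Perm (Fin r), F σ.extendLast := by
  refine (sum_nbij' extendLast (fun σ => removeNone (finSuccEquivLast.permCongr σ))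
    (by simp) (by simp) (fun σ _ => ?_) (fun σ hσ => ?_) fun _ _ => rfl).symm
  · rw [extendLast, ← permCongr_symm, apply_symm_apply, removeNone_optionCongr]
  · replace hσ : σ (Fin.last r) = Fin.last r := by simpa using hσ
    have hnone : finSuccEquivLast.permCongr σ none = none := by
      rw [permCongr_apply, finSuccEquivLast_symm_none, hσ, finSuccEquivLast_last]
    rw [extendLast, map_equiv_removeNone, hnone, swap_self, ← Perm.one_def, one_mul,
      ← permCongr_symm, symm_apply_apply]

end Equiv.Perm

section ManEps

variable {n r : ℕ} (q : Matrix (Fin n) (Fin n) ℂ)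

lemma manEps_eq_prod_finPairsLT (K : Fin r → Fin n) (σ : Perm (Fin r)) :
    manEps q K σ = ∏ x ∈ Perm.finPairsLT r,
      if σ x.1 < σ x.2 then -q (K (σ x.2)) (K (σ x.1)) else 1 := by
  rw [manEps, ← filter_filter, prod_filter]
  refine prod_nbij' (fun st => ⟨st.2, st.1⟩) (fun x => (x.2, x.1)) ?_ ?_ ?_ ?_ ?_ <;>
    simp [Perm.mem_finPairsLT]

lemma manEps_mul (hq : ∀ i j, q i j * q j i = 1) (K : Fin r → Fin n) (σ ρ : Perm (Fin r)) :
    manEps q K (σ * ρ) = manEps q (K ∘ σ) ρ * manEps q K σ := by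
  -- `signBijAux ρ` sends a pair `(a, b)` to `(ρ a, ρ b)` sorted, as in `Perm.signAux_mul`
  have reindex := prod_nbij (g := fun y : Σ _ : Fin r, Fin r =>
      if σ y.1 < σ y.2 then -q (K (σ y.2)) (K (σ y.1)) else 1) (Perm.signBijAux ρ)
    Perm.signBijAux_mem Perm.signBijAux_injOn Perm.signBijAux_surj fun _ _ => rfl
  simp only [manEps_eq_prod_finPairsLT, ← reindex, ← prod_mul_distrib]
  refine prod_congr rfl fun ⟨a, b⟩ hab => ?_
  have hρ : ρ a ≠ ρ b := ρ.injective.ne (Perm.mem_finPairsLT.1 hab).ne'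
  have hσρ : σ (ρ a) ≠ σ (ρ b) := σ.injective.ne hρ
  simp only [Perm.signBijAux, Perm.mul_apply, Function.comp_apply]
  rcases hρ.lt_or_gt with h | h <;> rcases hσρ.lt_or_gt with h' | h' <;>
    simp [h, h', h.not_gt, h'.not_gt, hq]

lemma manEps_one (K : Fin r → Fin n) : manEps q K 1 = 1 := by
  rw [manEps_eq_prod_finPairsLT]
  exact prod_eq_one fun x hx => if_neg (Perm.mem_finPairsLT.1 hx).not_gt

lemma manEps_ne_zero (hq : ∀ i j, q i j ≠ 0) (K : Fin r → Fin n) (σ : Perm (Fin r)) :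
    manEps q K σ ≠ 0 :=
  prod_ne_zero_iff.2 fun _ _ => neg_ne_zero.2 (hq _ _)

lemma manEps_swap_castSucc_succ (K : Fin (r + 1) → Fin n) (i : Fin r) :
    manEps q K (swap i.castSucc i.succ) = -q (K i.succ) (K i.castSucc) := by
  rw [manEps_eq_prod_finPairsLT,
    prod_eq_single_of_mem ⟨i.succ, i.castSucc⟩ (Perm.mem_finPairsLT.2 i.castSucc_lt_succ)]
  · simp [i.castSucc_lt_succ]
  · rintro ⟨a, b⟩ hab hne
    replace hne : ¬(a = i.succ ∧ b = i.castSucc) := fun h => hne (by rw [h.1, h.2])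
    rw [Perm.mem_finPairsLT] at hab
    refine if_neg ?_
    simp only [swap_apply_def]
    split_ifs <;>
      simp only [Fin.lt_def, Fin.ext_iff, Fin.val_castSucc, Fin.val_succ] at * <;> omega

lemma manEps_extendLast (K : Fin (r + 1) → Fin n) (σ : Perm (Fin r)) :
    manEps q K σ.extendLast = manEps q (K ∘ Fin.castSucc) σ := by
  simp only [manEps, prod_filter, Fintype.prod_prod_type, Fin.prod_univ_castSucc]
  simp [Fin.castSucc_lt_last, (Fin.castSucc_lt_last _).not_gt]

lemma manEpsIdx_coe_perm (π : Perm (Fin n)) : manEpsIdx q π = manEps q id π := by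
  rw [manEpsIdx, if_pos π.injective]
  rfl

end ManEps

lemma List.prod_ofFn_eq_take_mul_mul_drop {M : Type*} [Monoid M] {r : ℕ} (f g : Fin (r + 1) → M)
    (i : Fin r) (hfg : ∀ x, x ≠ i.castSucc → x ≠ i.succ → f x = g x) :
    (List.ofFn f).prod =
      ((List.ofFn g).take i).prod * (f i.castSucc * f i.succ) *
        ((List.ofFn g).drop (i + 2)).prod := by
  have htake : (List.ofFn f).take i = (List.ofFn g).take i :=
    List.ext_getElem (by simp) fun j hj _ => by
      simp only [List.length_take, List.length_ofFn] at hj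
      simp only [List.getElem_take, List.getElem_ofFn]
      exact hfg _ (by simp [Fin.ext_iff]; omega) (by simp [Fin.ext_iff]; omega)
  have hdrop : (List.ofFn f).drop (i + 2) = (List.ofFn g).drop (i + 2) :=
    List.ext_getElem (by simp) fun j _ _ => by
      simp only [List.getElem_drop, List.getElem_ofFn]
      exact hfg _ (by simp [Fin.ext_iff]; omega) (by simp [Fin.ext_iff]; omega)
  have hi : (i : ℕ) + 1 < (List.ofFn f).length := by simp
  conv_lhs => rw [← List.take_append_drop i (List.ofFn f)]
  rw [List.prod_append, List.drop_eq_getElem_cons (by omega), List.drop_eq_getElem_cons hi,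
    List.prod_cons, List.prod_cons, htake, hdrop, List.getElem_ofFn, List.getElem_ofFn]
  simp only [mul_assoc]
  rfl

lemma Fintype.sum_eq_smul_sum_of_add_mul_right {G E 𝕜 : Type*} [Group G] [Fintype G]
    [Field 𝕜] [CharZero 𝕜] [AddCommGroup E] [Module 𝕜 E] (τ : G) {f g : G → E} (c : 𝕜)
    (h : ∀ σ, f σ + f (σ * τ) = c • (g σ + g (σ * τ))) :
    ∑ σ, f σ = c • ∑ σ, g σ := by
  have reindex : ∀ F : G → E, ∑ σ, F (σ * τ) = ∑ σ, F σ := Equiv.sum_comp (Equiv.mulRight τ)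
  apply smul_right_injective E (two_ne_zero : (2 : 𝕜) ≠ 0)
  calc (2 : 𝕜) • ∑ σ, f σ = ∑ σ, (f σ + f (σ * τ)) := by
        rw [two_smul, sum_add_distrib, reindex]
    _ = ∑ σ, c • (g σ + g (σ * τ)) := Finset.sum_congr rfl fun σ _ => h σ
    _ = (2 : 𝕜) • c • ∑ σ, g σ := by
        rw [← smul_sum, sum_add_distrib, reindex, smul_comm, two_smul, smul_add]

section Cdet

variable {R : Type*} [Ring R] [Algebra ℂ R] {n m r : ℕ}
  {q : Matrix (Fin n) (Fin n) ℂ} {p : Matrix (Fin m) (Fin m) ℂ} {M : Matrix (Fin n) (Fin m) R}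

lemma IsManin.exchange (hq : IsParametric q) (hp : IsParametric p) (hM : IsManin q p M)
    (i j : Fin n) (k l : Fin m) :
    M i l * M j k - q j i • (M j l * M i k) =
      -p l k • (M i k * M j l - q j i • (M j k * M i l)) := by
  have of_lt : ∀ i j : Fin n, i < j → ∀ k l : Fin m,
      M i l * M j k - q j i • (M j l * M i k) =
        -p l k • (M i k * M j l - q j i • (M j k * M i l)) := by
    intro i j hij k l
    rcases lt_trichotomy k l with hkl | rfl | hlk
    · have hpp := hp.2.1 l k
      linear_combination (norm := skip) p l k • hM.2 i j k l hij hkl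
      match_scalars <;> grind
    · rw [hp.2.2 k]
      linear_combination (norm := module) (2 : ℂ) • hM.1 i j k hij
    · linear_combination (norm := module) hM.2 i j l k hij hlk
  rcases lt_trichotomy i j with hij | rfl | hji
  · exact of_lt i j hij k l
  · rw [hq.2.2 i]
    module
  · have hqq := hq.2.1 j i
    linear_combination (norm := skip) (-q j i) • of_lt j i hji k l
    match_scalars <;> grind

lemma cdet_comp_swap_castSucc_succ (hq : IsParametric q) (hp : IsParametric p)
    (hM : IsManin q p M) (K : Fin (r + 1) → Fin n) (L : Fin (r + 1) → Fin m) (i : Fin r) :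
    cdet q M K (L ∘ swap i.castSucc i.succ) = -p (L i.succ) (L i.castSucc) • cdet q M K L := by
  set τ := swap i.castSucc i.succ
  -- pair the summand of `σ` with that of `σ * τ`; the two differ at positions `i`, `i + 1` only
  refine Fintype.sum_eq_smul_sum_of_add_mul_right τ _ fun σ => ?_
  have hε : manEps q K (σ * τ) = -q (K (σ i.succ)) (K (σ i.castSucc)) * manEps q K σ := by
    rw [manEps_mul q hq.2.1, manEps_swap_castSucc_succ]
    rfl
  set g := fun x => M (K (σ x)) (L x)
  set A := ((List.ofFn g).take i).prod
  set B := ((List.ofFn g).drop (i + 2)).prod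
  have split := fun f hf => List.prod_ofFn_eq_take_mul_mul_drop f g i hf
  have hτ : ∀ x, x ≠ i.castSucc → x ≠ i.succ → τ x = x := fun _ => swap_apply_of_ne_of_ne
  simp only [Function.comp_apply, Perm.mul_apply]
  rw [split (fun x => M (K (σ x)) (L (τ x))) fun x h₁ h₂ => by rw [hτ x h₁ h₂],
    split (fun x => M (K (σ (τ x))) (L (τ x))) fun x h₁ h₂ => by rw [hτ x h₁ h₂],
    split (fun x => M (K (σ (τ x))) (L x)) fun x h₁ h₂ => by rw [hτ x h₁ h₂],
    split g fun _ _ _ => rfl, hε]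
  simp only [τ, swap_apply_left, swap_apply_right]
  have key := congrArg (fun X => manEps q K σ • (A * X * B))
    (hM.exchange hq hp (K (σ i.castSucc)) (K (σ i.succ)) (L i.castSucc) (L i.succ))
  simp only [mul_sub, sub_mul, mul_smul_comm, smul_mul_assoc, smul_sub, smul_smul] at key ⊢
  linear_combination (norm := module) key

lemma cdet_comp_perm_col (hq : IsParametric q) (hp : IsParametric p) (hM : IsManin q p M)
    (K : Fin r → Fin n) (L : Fin r → Fin m) (π : Perm (Fin r)) :
    cdet q M K (L ∘ π) = manEps p L π • cdet q M K L := by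
  cases r with
  | zero => rw [Subsingleton.elim π 1, manEps_one, one_smul, Perm.coe_one, Function.comp_id]
  | succ r =>
    have hπ : π ∈ Submonoid.closure (Set.range fun i : Fin r => swap i.castSucc i.succ) := by
      rw [Perm.mclosure_swap_castSucc_succ]
      trivial
    induction hπ using Submonoid.closure_induction generalizing L with
    | mem _ h =>
      obtain ⟨i, rfl⟩ := h
      rw [cdet_comp_swap_castSucc_succ hq hp hM, manEps_swap_castSucc_succ]
    | one => rw [manEps_one, one_smul, Perm.coe_one, Function.comp_id]
    | mul σ ρ _ _ hσ hρ =>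
      rw [Perm.coe_mul, ← Function.comp_assoc, hρ, hσ, manEps_mul p hp.2.1, smul_smul]

lemma cdet_eq_zero_of_apply_eq (hq : IsParametric q) (hp : IsParametric p) (hM : IsManin q p M)
    (K : Fin r → Fin n) {L : Fin r → Fin m} {s t : Fin r} (hst : s ≠ t) (hL : L s = L t) :
    cdet q M K L = 0 := by
  wlog hlt : s < t generalizing s t
  · exact this hst.symm hL.symm (hst.symm.lt_of_le (not_lt.1 hlt))
  obtain ⟨r, rfl⟩ : ∃ r', r = r' + 1 := ⟨r - 1, by have := t.isLt; omega⟩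
  obtain ⟨i, rfl⟩ : ∃ i : Fin r, i.castSucc = s :=
    ⟨s.castPred (Fin.ne_last_of_lt hlt), Fin.castSucc_castPred _ _⟩
  -- moving column `t` next to column `s` only rescales the determinant by a nonzero factor
  set L' := L ∘ swap i.succ t
  have h₁ : L' i.castSucc = L' i.succ := by
    simp [L', swap_apply_of_ne_of_ne Fin.castSucc_lt_succ.ne hst, hL]
  have hL' : L' ∘ swap i.castSucc i.succ = L' := by
    ext x
    rcases eq_or_ne x i.castSucc with rfl | hx₁
    · simp [h₁]
    rcases eq_or_ne x i.succ with rfl | hx₂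
    · simp [h₁]
    · simp [swap_apply_of_ne_of_ne hx₁ hx₂]
  have hzero : cdet q M K L' = 0 := by
    have h := cdet_comp_swap_castSucc_succ hq hp hM K L' i
    rw [hL', h₁, hp.2.2, neg_one_smul] at h
    refine smul_right_injective R (two_ne_zero : (2 : ℂ) ≠ 0) ?_
    change (2 : ℂ) • cdet q M K L' = (2 : ℂ) • 0
    rw [two_smul, smul_zero]
    nth_rewrite 2 [h]
    exact add_neg_cancel _
  rw [cdet_comp_perm_col hq hp hM] at hzero
  exact (smul_eq_zero.1 hzero).resolve_left (manEps_ne_zero p hp.1 L _)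

lemma cdet_eq_smul_cdet_comp_perm_row (hq : ∀ i j, q i j * q j i = 1) (K : Fin r → Fin n)
    (L : Fin r → Fin m) (π : Perm (Fin r)) :
    cdet q M K L = manEps q K π • cdet q M (K ∘ π) L := by
  rw [cdet, ← Equiv.sum_comp (Equiv.mulLeft π), cdet, smul_sum]
  refine sum_congr rfl fun σ _ => ?_
  rw [coe_mulLeft, manEps_mul q hq, mul_comm, ← smul_smul]
  rfl

lemma cdet_fin_zero (K : Fin 0 → Fin n) (L : Fin 0 → Fin m) : cdet q M K L = 1 := by
  simp [cdet, manEps_one]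

lemma cdet_update_last (K : Fin (r + 1) → Fin n) (L : Fin (r + 1) → Fin m) (l : Fin m) :
    cdet q M K (Function.update L (Fin.last r) l) = ∑ σ : Perm (Fin (r + 1)), manEps q K σ •
      ((List.ofFn fun a : Fin r => M (K (σ a.castSucc)) (L a.castSucc)).prod *
        M (K (σ (Fin.last r))) l) := by
  refine sum_congr rfl fun σ _ => ?_
  rw [List.ofFn_succ', List.prod_concat]
  simp

lemma cdet_mul_eq_cdet_castSucc (hq : IsParametric q) (hp : IsParametric p) (hM : IsManin q p M)
    (K : Fin (r + 1) → Fin n) (L : Fin (r + 1) → Fin m) (z : Fin (r + 1) → R)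
    (hz : ∀ a, ∑ b, M (K a) (L b) * z b = if a = Fin.last r then 1 else 0) :
    cdet q M K L * z (Fin.last r) = cdet q M (K ∘ Fin.castSucc) (L ∘ Fin.castSucc) := by
  set head : Perm (Fin (r + 1)) → R := fun σ =>
    (List.ofFn fun a : Fin r => M (K (σ a.castSucc)) (L a.castSucc)).prod
  have other_col : ∀ b ≠ Fin.last r, cdet q M K (Function.update L (Fin.last r) (L b)) = 0 :=
    fun b hb => cdet_eq_zero_of_apply_eq hq hp hM K hb (by simp [Function.update_of_ne hb])
  calc cdet q M K L * z (Fin.last r)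
      = ∑ b, cdet q M K (Function.update L (Fin.last r) (L b)) * z b := by
        rw [sum_eq_single (Fin.last r) (fun b _ hb => by rw [other_col b hb, zero_mul])
          (by simp), Function.update_eq_self]
    _ = ∑ σ, manEps q K σ • (head σ * ∑ b, M (K (σ (Fin.last r))) (L b) * z b) := by
        simp only [cdet_update_last, sum_mul, mul_sum, smul_sum, smul_mul_assoc, mul_assoc]
        exact sum_comm
    _ = ∑ σ with σ (Fin.last r) = Fin.last r, manEps q K σ • head σ := by
        rw [sum_filter]
        refine sum_congr rfl fun σ _ => ?_
        rw [hz]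
        split_ifs <;> simp
    _ = cdet q M (K ∘ Fin.castSucc) (L ∘ Fin.castSucc) := by
        rw [Perm.sum_filter_apply_last_eq_last]
        refine sum_congr rfl fun σ _ => ?_
        simp [head, manEps_extendLast]

lemma cdet_comp_mul_inverse_entry (hq : IsParametric q) (hp : IsParametric p)
    (hM : IsManin q p M) (e : Fin (r + 1) → Fin n) (f : Fin (r + 1) → Fin m)
    {Y : Matrix (Fin (r + 1)) (Fin (r + 1)) R} (hY : M.submatrix e f * Y = 1)
    {α β : Fin (r + 1) → Fin (r + 1)} (hα : Function.Injective α) (hβ : Function.Injective β) :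
    cdet q M (e ∘ α) (f ∘ β) * Y (β (Fin.last r)) (α (Fin.last r)) =
      cdet q M ((e ∘ α) ∘ Fin.castSucc) ((f ∘ β) ∘ Fin.castSucc) := by
  refine cdet_mul_eq_cdet_castSucc hq hp hM (e ∘ α) (f ∘ β) (fun b => Y (β b) (α (Fin.last r)))
    fun a => ?_
  have h := congrFun (congrFun hY (α a)) (α (Fin.last r))
  simp only [Matrix.mul_apply, Matrix.submatrix_apply, Matrix.one_apply, hα.eq_iff] at h
  rw [← h]
  exact Fintype.sum_bijective β (Finite.injective_iff_bijective.1 hβ) _ _ fun _ => rfl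

end Cdet

section FirstIdx

variable {n : ℕ} {I : Fin n → Fin n}

/-- The position of `i_{a+1}` in the increasing rearrangement `I_{k+1}`. -/
def firstIdxPos (hI : Function.Injective I) (k : Fin n) (a : Fin (k + 1)) : Fin (k + 1) :=
  ((firstIdx I k).orderIsoOfFin (firstIdx_card hI k)).symm
    ⟨I (Fin.castLE k.isLt a), mem_image_of_mem _ (mem_univ a)⟩

lemma orderEmbOfFin_comp_firstIdxPos (hI : Function.Injective I) (k : Fin n) :
    (firstIdx I k).orderEmbOfFin (firstIdx_card hI k) ∘ firstIdxPos hI k =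
      I ∘ Fin.castLE k.isLt := by
  ext a
  simp [firstIdxPos, ← coe_orderIsoOfFin_apply]

lemma firstIdxPos_injective (hI : Function.Injective I) (k : Fin n) :
    Function.Injective (firstIdxPos hI k) :=
  .of_comp (f := (firstIdx I k).orderEmbOfFin (firstIdx_card hI k)) <| by
    rw [orderEmbOfFin_comp_firstIdxPos]
    exact hI.comp (Fin.castLE_injective _)

end FirstIdx

/-- Indices are shifted by one: `Y k` and `w k` belong to the minor `M_{J_{k+1} I_{k+1}}`. -/
theorem cdet_eq_prod_quasideterminants {R : Type*} [Ring R] [Algebra ℂ R] {n : ℕ}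
    (q p : Matrix (Fin n) (Fin n) ℂ) (hq : IsParametric q) (hp : IsParametric p)
    (M : Matrix (Fin n) (Fin n) R) (hM : IsManin q p M)
    (I J : Fin n → Fin n) (hI : Function.Bijective I) (hJ : Function.Bijective J)
    (Y : ∀ k : Fin n, Matrix (Fin ((k : ℕ) + 1)) (Fin ((k : ℕ) + 1)) R)
    (hY : ∀ k : Fin n,
      M.submatrix ⇑((firstIdx J k).orderEmbOfFin (firstIdx_card hJ.1 k))
          ⇑((firstIdx I k).orderEmbOfFin (firstIdx_card hI.1 k)) * Y k = 1 ∧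
      Y k * M.submatrix ⇑((firstIdx J k).orderEmbOfFin (firstIdx_card hJ.1 k))
          ⇑((firstIdx I k).orderEmbOfFin (firstIdx_card hI.1 k)) = 1)
    (w : Fin n → R)
    (hw : ∀ k : Fin n,
      Y k ((Finset.orderIsoOfFin _ (firstIdx_card hI.1 k)).symm ⟨I k, self_mem_firstIdx I k⟩)
          ((Finset.orderIsoOfFin _ (firstIdx_card hJ.1 k)).symm ⟨J k, self_mem_firstIdx J k⟩)
        * w k = 1 ∧
      w k *
        Y k ((Finset.orderIsoOfFin _ (firstIdx_card hI.1 k)).symm ⟨I k, self_mem_firstIdx I k⟩)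
          ((Finset.orderIsoOfFin _ (firstIdx_card hJ.1 k)).symm ⟨J k, self_mem_firstIdx J k⟩)
        = 1) :
    cdet q M id id = (manEpsIdx q J / manEpsIdx p I) • (List.ofFn w).prod := by
  have step (k : Fin n) : cdet q M (J ∘ Fin.castLE k.isLt) (I ∘ Fin.castLE k.isLt) =
      cdet q M (J ∘ Fin.castLE k.isLt.le) (I ∘ Fin.castLE k.isLt.le) * w k := by
    have h := cdet_comp_mul_inverse_entry hq hp hM _ _ (hY k).1
      (firstIdxPos_injective hJ.1 k) (firstIdxPos_injective hI.1 k)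
    rw [orderEmbOfFin_comp_firstIdxPos, orderEmbOfFin_comp_firstIdxPos] at h
    have hwk : Y k (firstIdxPos hI.1 k (Fin.last k)) (firstIdxPos hJ.1 k (Fin.last k)) * w k = 1 :=
      (hw k).1
    rw [← mul_one (cdet q M _ _), ← hwk, ← mul_assoc, h]
    rfl
  have prefixes (r : ℕ) (hr : r ≤ n) : cdet q M (J ∘ Fin.castLE hr) (I ∘ Fin.castLE hr) =
      (List.ofFn (w ∘ Fin.castLE hr)).prod := by
    induction r with
    | zero => simp [cdet_fin_zero]
    | succ r ih =>
      rw [step ⟨r, hr⟩, ih, List.ofFn_succ', List.prod_concat]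
      rfl
  have hJI : cdet q M J I = (List.ofFn w).prod := by
    simpa using prefixes n le_rfl
  set πI := Equiv.ofBijective I hI
  set πJ := Equiv.ofBijective J hJ
  have hcol := cdet_comp_perm_col hq hp hM id id πI
  have hrow := cdet_eq_smul_cdet_comp_perm_row (M := M) hq.2.1 id I πJ
  rw [show manEpsIdx q J = manEps q id πJ from manEpsIdx_coe_perm q πJ,
    show manEpsIdx p I = manEps p id πI from manEpsIdx_coe_perm p πI, div_eq_inv_mul,
    ← smul_smul, ← hJI, eq_inv_smul_iff₀ (manEps_ne_zero p hp.1 id πI)]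
  exact hcol.symm.trans hrow
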